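/- arXiv:1604.05066 — 4 statements merged into one kernel-verified Lean document; each statement's English description precedes it below -/
import Mathlib

section
/- Let k ≥ 2 and r ≥ 1, and let H be a graph such that every r-colouring of the edges of H contains a monochromatic cycle of length k, but for every edge e of H, the graph H - e admits an r-colouring of its edges with no monochromatic cycle of length k. Then every vertex of H that is incident to at least one edge has degree at least r + 1. -/
/-!
If a vertex `v` with an edge `e = vw` had degree at most `r`, the other edges at `v` would miss
some colour `i`. Colour `H - e` without a monochromatic `C_k` and give `e` the colour `i`. A
monochromatic `C_k` avoiding `e` would already lie in `H - e`; one through `e` passes through `v`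
along a second edge, whose colour is not `i`.
-/

/-- `HasMonoCycle H k r c` means the edge-colouring `c` of `H` (with `r` colours)
admits a monochromatic cycle of length `k`. -/
def HasMonoCycle {V : Type*} (H : SimpleGraph V) (k r : ℕ) (c : Sym2 V → Fin r) : Prop :=
  ∃ (i : Fin r) (v : V) (w : H.Walk v v), w.IsCycle ∧ w.length = k ∧ ∀ e ∈ w.edges, c e = i

namespace SimpleGraph

variable {V : Type*} {G : SimpleGraph V}

theorem Walk.IsCycle.exists_mem_edges_ne {u v : V} {W : G.Walk u u} (hW : W.IsCycle)
    (hv : v ∈ W.support) (e : Sym2 V) : ∃ z, s(v, z) ∈ W.edges ∧ s(v, z) ≠ e := by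
  classical
  set W' := W.rotate v hv
  have hW' : W'.IsCycle := hW.rotate hv
  have hedges : ∀ x ∈ W'.edges, x ∈ W.edges := fun _ => (W.rotate_edges v hv).mem_iff.mp
  have hfirst := W'.mk_start_snd_mem_edges hW'.not_nil
  have hlast := W'.mk_penultimate_end_mem_edges hW'.not_nil
  rw [Sym2.eq_swap] at hlast
  by_cases hfirst_e : s(v, W'.snd) = e
  · refine ⟨_, hedges _ hlast, fun hlast_e => hW'.snd_ne_penultimate ?_⟩
    exact Sym2.congr_right.mp (hfirst_e.trans hlast_e.symm)
  · exact ⟨_, hedges _ hfirst, hfirst_e⟩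

theorem exists_ne_color_of_degree_le [Fintype V] [DecidableRel G.Adj] {α : Type*}
    [Fintype α] {v w : V} (hvw : G.Adj v w) (hdeg : G.degree v ≤ Fintype.card α)
    (c : Sym2 V → α) : ∃ i : α, ∀ z, G.Adj v z → z ≠ w → c s(v, z) ≠ i := by
  classical
  set others := (G.neighborFinset v).erase w
  have hcard : (others.image fun z => c s(v, z)).card < (Finset.univ : Finset α).card := by
    have hothers : others.card = G.degree v - 1 :=
      Finset.card_erase_of_mem ((G.mem_neighborFinset v w).mpr hvw)
    have hpos : 0 < G.degree v := (G.degree_pos_iff_exists_adj v).mpr ⟨w, hvw⟩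
    calc (others.image fun z => c s(v, z)).card ≤ others.card := Finset.card_image_le
      _ < Fintype.card α := by omega
  obtain ⟨i, -, hi⟩ := Finset.exists_mem_notMem_of_card_lt_card hcard
  refine ⟨i, fun z hvz hzw hzi => hi (Finset.mem_image.mpr ⟨z, ?_, hzi⟩)⟩
  exact Finset.mem_erase.mpr ⟨hzw, (G.mem_neighborFinset v z).mpr hvz⟩

end SimpleGraph

section HasMonoCycle

variable {V : Type*} {H : SimpleGraph V} {k r : ℕ}

theorem hasMonoCycle_deleteEdges_of_isCycle {c : Sym2 V → Fin r} {i : Fin r} {u : V}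
    {W : H.Walk u u} (hW : W.IsCycle) (hlen : W.length = k) (hmono : ∀ e ∈ W.edges, c e = i)
    {s : Set (Sym2 V)} (hs : ∀ e ∈ W.edges, e ∉ s) :
    HasMonoCycle (H.deleteEdges s) k r c := by
  have hsub : ∀ e ∈ W.edges, e ∈ (H.deleteEdges s).edgeSet := fun e he => by
    rw [SimpleGraph.edgeSet_deleteEdges]
    exact ⟨W.edges_subset_edgeSet he, hs e he⟩
  refine ⟨i, u, W.transfer _ hsub, hW.transfer hsub, ?_, ?_⟩
  · rwa [SimpleGraph.Walk.length_transfer]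
  · rwa [SimpleGraph.Walk.edges_transfer]

theorem not_hasMonoCycle_update [DecidableEq V] {c : Sym2 V → Fin r} {v w : V}
    (hc : ¬ HasMonoCycle (H.deleteEdges {s(v, w)}) k r c) {i : Fin r}
    (hi : ∀ z, H.Adj v z → z ≠ w → c s(v, z) ≠ i) :
    ¬ HasMonoCycle H k r (Function.update c s(v, w) i) := by
  rintro ⟨j, u, W, hW, hlen, hmono⟩
  by_cases hvw : s(v, w) ∈ W.edges
  · have hij : i = j := by simpa using hmono _ hvw
    obtain ⟨z, hz, hzw⟩ := hW.exists_mem_edges_ne (W.fst_mem_support_of_mem_edges hvw) s(v, w)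
    have hcz := hmono _ hz
    rw [Function.update_of_ne hzw] at hcz
    exact hi z (W.adj_of_mem_edges hz) (by rintro rfl; exact hzw rfl) (hcz.trans hij.symm)
  · refine hc (hasMonoCycle_deleteEdges_of_isCycle (i := j) hW hlen (fun e he => ?_) ?_)
    · have hne : e ≠ s(v, w) := by rintro rfl; exact hvw he
      rw [← Function.update_of_ne hne i c]
      exact hmono e he
    · rintro e he rfl
      exact hvw he

end HasMonoCycle

theorem stmt_5_general {V : Type*} [Fintype V] (H : SimpleGraph V) [DecidableRel H.Adj]
    (k r : ℕ)
    (hRam : ∀ c : Sym2 V → Fin r, HasMonoCycle H k r c)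
    (hmin : ∀ e ∈ H.edgeSet, ∃ c : Sym2 V → Fin r,
      ¬ HasMonoCycle (H.deleteEdges {e}) k r c) :
    ∀ v : V, 0 < H.degree v → r + 1 ≤ H.degree v := by
  classical
  intro v hv
  by_contra! hdeg
  obtain ⟨w, hvw⟩ := (H.degree_pos_iff_exists_adj v).mp hv
  obtain ⟨c, hc⟩ := hmin s(v, w) hvw
  obtain ⟨i, hi⟩ := H.exists_ne_color_of_degree_le hvw (by simpa using Nat.le_of_lt_succ hdeg) c
  exact not_hasMonoCycle_update hc hi (hRam _)

theorem stmt_5 {V : Type*} [Fintype V] (H : SimpleGraph V) [DecidableRel H.Adj]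
    (k r : ℕ) (hk : 2 ≤ k) (hr : 1 ≤ r)
    (hRam : ∀ c : Sym2 V → Fin r, HasMonoCycle H k r c)
    (hmin : ∀ e ∈ H.edgeSet, ∃ c : Sym2 V → Fin r,
      ¬ HasMonoCycle (H.deleteEdges {e}) k r c) :
    ∀ v : V, 0 < H.degree v → r + 1 ≤ H.degree v :=
  stmt_5_general H k r hRam hmin
end

section
/- Let W ≥ k ≥ 3 and r ≥ 1 be integers such that every r-colouring of any arithmetic progression of length W in ℕ yields a monochromatic arithmetic progression of length k. Let n ≥ 2W² and consider any (r+1)-colouring of [n] = {1,...,n} in which at most n/(4W) elements receive colour r+1. Then the number of arithmetic progressions of length k in [n] that are monochromatic in one of the first r colours is at least n²/(2W³). -/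
/-!
Cover `[n]` by the `W`-term progressions `a, a + d, …, a + (W - 1)d` with
`d ≤ D := ⌊3n / 4W⌋`; there are about `Dn - W D² / 2` of them. Each element of colour `r + 1`
lies in at most `W D` of them, so at most `nD / 4` meet that colour. Every other one is
`r`-coloured and hence contains a monochromatic `k`-term progression; conversely a `k`-term
progression lies in at most `W.choose 2` of the `W`-term ones, since each of these is determined by
the positions in it of the first two terms of the `k`-term one. The choice of `D` makes the
resulting lower bound exceed `n² / (2W³)`.
-/

/-- The arithmetic progression `{a, a+d, ..., a+(m-1)d}` as a finite set. -/
def AP (m a d : ℕ) : Finset ℕ := (Finset.range m).image (fun i => a + i * d)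

open Finset

lemma mem_AP {m a d x : ℕ} : x ∈ AP m a d ↔ ∃ i < m, x = a + i * d := by
  simp [AP, eq_comm]

lemma AP_subset_Icc {m a d n : ℕ} (ha : 1 ≤ a) (hn : a + (m - 1) * d ≤ n) :
    AP m a d ⊆ Icc 1 n := by
  intro x hx
  obtain ⟨i, hi, rfl⟩ := mem_AP.1 hx
  have : i * d ≤ (m - 1) * d := Nat.mul_le_mul_right _ (by omega)
  rw [mem_Icc]
  omega

lemma card_filter_AP_subset_le {k W b e : ℕ} (hk : 2 ≤ k) (he : 0 < e)
    (S : Finset (ℕ × ℕ)) :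
    #{p ∈ S | AP k b e ⊆ AP W p.1 p.2} ≤ W.choose 2 := by
  let recover : ℕ × ℕ → ℕ × ℕ := fun q => (b - q.1 * (e / (q.2 - q.1)), e / (q.2 - q.1))
  calc #{p ∈ S | AP k b e ⊆ AP W p.1 p.2}
      ≤ #({q ∈ range W ×ˢ range W | q.1 < q.2}.image recover) := by
        refine card_le_card fun p hp => ?_
        have hsub := (mem_filter.1 hp).2
        have hb : b ∈ AP k b e := mem_AP.2 ⟨0, by omega, by ring⟩
        have hbe : b + e ∈ AP k b e := mem_AP.2 ⟨1, by omega, by ring⟩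
        obtain ⟨i, hi, hb⟩ := mem_AP.1 (hsub hb)
        obtain ⟨j, hj, hbe⟩ := mem_AP.1 (hsub hbe)
        have hij : i < j := Nat.lt_of_mul_lt_mul_right (a := p.2) (by omega)
        have he' : e = (j - i) * p.2 := by rw [Nat.sub_mul]; omega
        have hdiv : e / (j - i) = p.2 := by rw [he', Nat.mul_div_cancel_left _ (by omega)]
        refine mem_image.2 ⟨(i, j), by simp [hi, hj, hij], Prod.ext ?_ hdiv⟩
        change b - i * (e / (j - i)) = p.1
        rw [hdiv]
        omega
    _ ≤ #{q ∈ range W ×ˢ range W | q.1 < q.2} := card_image_le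
    _ = W.choose 2 := by rw [card_product_filter_lt, card_range]

lemma card_le_choose_two_mul_card {k W : ℕ} (hk : 2 ≤ k) (S : Finset (ℕ × ℕ))
    (T : Finset (Finset ℕ)) (hT : ∀ P ∈ T, ∃ b e, 0 < e ∧ P = AP k b e)
    (hS : ∀ p ∈ S, ∃ P ∈ T, P ⊆ AP W p.1 p.2) : #S ≤ W.choose 2 * #T := by
  choose! f hfT hfsub using hS
  refine card_le_mul_card_image_of_maps_to hfT _ fun P hP => ?_
  obtain ⟨b, e, he, rfl⟩ := hT P hP
  calc #{p ∈ S | f p = AP k b e} ≤ #{p ∈ S | AP k b e ⊆ AP W p.1 p.2} :=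
        card_le_card fun p hp => by
          rw [mem_filter] at hp ⊢
          exact ⟨hp.1, hp.2 ▸ hfsub p hp.1⟩
    _ ≤ W.choose 2 := card_filter_AP_subset_le hk he S

lemma card_filter_not_disjoint_AP_le (W D : ℕ) (B : Finset ℕ) (S : Finset (ℕ × ℕ))
    (hS : ∀ p ∈ S, p.2 ∈ Icc 1 D) :
    #{p ∈ S | ¬Disjoint (AP W p.1 p.2) B} ≤ #B * (W * D) := by
  calc #{p ∈ S | ¬Disjoint (AP W p.1 p.2) B}
      ≤ #((B ×ˢ (range W ×ˢ Icc 1 D)).image fun q => (q.1 - q.2.1 * q.2.2, q.2.2)) := by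
        refine card_le_card fun p hp => ?_
        obtain ⟨hpS, hp⟩ := mem_filter.1 hp
        obtain ⟨x, hxAP, hxB⟩ := not_disjoint_iff.1 hp
        obtain ⟨i, hi, rfl⟩ := mem_AP.1 hxAP
        exact mem_image.2 ⟨(p.1 + i * p.2, i, p.2), by simp [hxB, hi, hS p hpS], by simp⟩
    _ ≤ #(B ×ˢ (range W ×ˢ Icc 1 D)) := card_image_le
    _ = #B * (W * D) := by simp

/-- The `W`-term progressions in `[n]` with difference at most `D`, encoded as pairs
(first term, difference). -/
def apsOfDiffLE (n W D : ℕ) : Finset (ℕ × ℕ) :=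
  (Icc 1 D).biUnion fun d => (Icc 1 (n - (W - 1) * d)).image fun a => (a, d)

lemma mem_apsOfDiffLE {n W D : ℕ} {p : ℕ × ℕ} :
    p ∈ apsOfDiffLE n W D ↔ 1 ≤ p.1 ∧ p.1 + (W - 1) * p.2 ≤ n ∧ p.2 ∈ Icc 1 D := by
  obtain ⟨a, d⟩ := p
  simp only [apsOfDiffLE, mem_biUnion, mem_image, mem_Icc, Prod.mk.injEq]
  constructor
  · rintro ⟨d, hd, a, ha, rfl, rfl⟩
    exact ⟨ha.1, by omega, hd⟩
  · rintro ⟨ha, han, hd⟩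
    exact ⟨d, hd, a, ⟨ha, by omega⟩, rfl, rfl⟩

lemma sum_Icc_sub_mul (n c : ℝ) (D : ℕ) :
    ∑ d ∈ Icc 1 D, (n - c * d) = D * n - c * (D * (D + 1) / 2) := by
  induction D with
  | zero => simp
  | succ D ih =>
    rw [sum_Icc_succ_top (by omega), ih]
    push_cast
    ring

lemma card_apsOfDiffLE {n W D : ℕ} (h : (W - 1) * D ≤ n) :
    (#(apsOfDiffLE n W D) : ℝ) = D * n - ((W - 1 : ℕ) : ℝ) * (D * (D + 1) / 2) := by
  have hcard : #(apsOfDiffLE n W D) = ∑ d ∈ Icc 1 D, (n - (W - 1) * d) := by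
    rw [apsOfDiffLE, card_biUnion]
    · refine sum_congr rfl fun d _ => ?_
      rw [card_image_of_injective _ fun a b hab => (Prod.ext_iff.1 hab).1, Nat.card_Icc,
        Nat.add_sub_cancel]
    · intro d _ d' _ hdd'
      simp only [Function.onFun, disjoint_left, mem_image]
      rintro _ ⟨a, -, rfl⟩ ⟨a', -, h⟩
      exact hdd' (congrArg Prod.snd h).symm
  rw [hcard, Nat.cast_sum, ← sum_Icc_sub_mul]
  refine sum_congr rfl fun d hd => ?_
  have : (W - 1) * d ≤ n := (Nat.mul_le_mul_left _ (mem_Icc.1 hd).2).trans h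
  push_cast [Nat.cast_sub this]
  ring

lemma card_filter_disjoint_apsOfDiffLE_ge {n W D : ℕ} (hW : 1 ≤ W) (h : (W - 1) * D ≤ n)
    (B : Finset ℕ) :
    D * n - ((W : ℝ) - 1) * (D * (D + 1) / 2) - #B * (W * D) ≤
      #{p ∈ apsOfDiffLE n W D | Disjoint (AP W p.1 p.2) B} := by
  have hsplit := card_filter_add_card_filter_not (s := apsOfDiffLE n W D)
    (p := fun p => Disjoint (AP W p.1 p.2) B)
  have hbad := card_filter_not_disjoint_AP_le W D B (apsOfDiffLE n W D)
    fun p hp => (mem_apsOfDiffLE.1 hp).2.2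
  rw [← Nat.cast_inj (R := ℝ), card_apsOfDiffLE h, Nat.cast_sub hW] at hsplit
  push_cast at hsplit
  have hbadR : (#{p ∈ apsOfDiffLE n W D | ¬Disjoint (AP W p.1 p.2) B} : ℝ) ≤
      #B * (W * D) := by
    exact_mod_cast hbad
  linarith

def monochromaticAPs (k n r : ℕ) (χ : ℕ → Fin (r + 1)) : Set (Finset ℕ) :=
  {P | (∃ a d : ℕ, 0 < d ∧ P = AP k a d) ∧ ↑P ⊆ Set.Icc 1 n ∧
    ∃ i : Fin (r + 1), i ≠ Fin.last r ∧ ∀ x ∈ P, χ x = i}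

lemma monochromaticAPs_finite (k n r : ℕ) (χ : ℕ → Fin (r + 1)) :
    (monochromaticAPs k n r χ).Finite :=
  (Icc 1 n).powerset.finite_toSet.subset fun _ hP => by simpa using hP.2.1

lemma exists_monochromatic_AP_of_forall_ne_last {k W r a d : ℕ} (hr : 1 ≤ r)
    (hvdW : ∀ c : ℕ → Fin r, ∃ a' d' : ℕ, 0 < d' ∧ AP k a' d' ⊆ AP W a d ∧
      ∃ i : Fin r, ∀ x ∈ AP k a' d', c x = i)
    (χ : ℕ → Fin (r + 1)) (hχ : ∀ x ∈ AP W a d, χ x ≠ Fin.last r) :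
    ∃ a' d', 0 < d' ∧ AP k a' d' ⊆ AP W a d ∧
      ∃ i, i ≠ Fin.last r ∧ ∀ x ∈ AP k a' d', χ x = i := by
  obtain ⟨a', d', hd', hsub, i, hi⟩ := hvdW fun x =>
    if h : χ x = Fin.last r then ⟨0, hr⟩ else (χ x).castPred h
  refine ⟨a', d', hd', hsub, i.castSucc, (Fin.castSucc_lt_last i).ne, fun x hx => ?_⟩
  have hix := hi x hx
  rw [dif_neg (hχ x (hsub hx))] at hix
  rw [← hix, Fin.castSucc_castPred]

lemma card_filter_disjoint_apsOfDiffLE_le {k W r n D : ℕ} (hk : 2 ≤ k) (hr : 1 ≤ r)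
    (hvdW : ∀ a d : ℕ, 0 < d → ∀ c : ℕ → Fin r,
      ∃ a' d' : ℕ, 0 < d' ∧ AP k a' d' ⊆ AP W a d ∧
        ∃ i : Fin r, ∀ x ∈ AP k a' d', c x = i)
    (χ : ℕ → Fin (r + 1)) :
    #{p ∈ apsOfDiffLE n W D | Disjoint (AP W p.1 p.2) {x ∈ Icc 1 n | χ x = Fin.last r}} ≤
      W.choose 2 * (monochromaticAPs k n r χ).ncard := by
  have hfin := monochromaticAPs_finite k n r χ
  rw [Set.ncard_eq_toFinset_card _ hfin]
  refine card_le_choose_two_mul_card hk _ _ (fun P hP => ?_) fun p hp => ?_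
  · obtain ⟨⟨b, e, he, rfl⟩, -⟩ := hfin.mem_toFinset.1 hP
    exact ⟨b, e, he, rfl⟩
  · obtain ⟨hpA, hdisj⟩ := mem_filter.1 hp
    obtain ⟨ha, han, hd⟩ := mem_apsOfDiffLE.1 hpA
    have hIcc := AP_subset_Icc ha han
    obtain ⟨a', d', hd', hsub, i, hi, hmono⟩ :=
      exists_monochromatic_AP_of_forall_ne_last hr (hvdW _ _ (mem_Icc.1 hd).1) χ
        fun x hx hχ => disjoint_left.1 hdisj hx (mem_filter.2 ⟨hIcc hx, hχ⟩)
    refine ⟨AP k a' d', hfin.mem_toFinset.2 ⟨⟨a', d', hd', rfl⟩, ?_, i, hi, hmono⟩, hsub⟩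
    rw [← coe_Icc]
    exact coe_subset.2 (hsub.trans hIcc)

lemma quadratic_lower_bound {W n D : ℝ} (hW : 3 ≤ W) (hn : 2 * W ^ 2 ≤ n)
    (hD : 4 * W * D ≤ 3 * n) (hD' : 3 * n < 4 * W * (D + 1)) :
    W * (W - 1) / 2 * (n ^ 2 / (2 * W ^ 3)) ≤
      D * n - (W - 1) * (D * (D + 1) / 2) - n / (4 * W) * (W * D) := by
  -- At `D = 3n / 4W` the right side is about `9n² / 32W`, the left one about `n² / 4W`.
  have hlow : n * (3 * W - 2) ≤ 4 * W ^ 2 * D := by nlinarith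
  have hup : 4 * W * ((W - 1) * (D + 1)) ≤ n * (3 * W - 1) := by nlinarith
  have hD0 : 0 ≤ D := by nlinarith
  have h1 : D * n * (3 * W + 1) ≤ 2 * W * (D * (3 * n - 2 * (W - 1) * (D + 1))) := by
    nlinarith
  have h2 : n * (3 * W - 2) * (n * (3 * W + 1)) ≤ 4 * W ^ 2 * D * (n * (3 * W + 1)) := by
    gcongr
    nlinarith
  have hW0 : W ≠ 0 := by positivity
  have hlhs : W * (W - 1) / 2 * (n ^ 2 / (2 * W ^ 3)) = (W - 1) * n ^ 2 / (4 * W ^ 2) := by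
    field_simp
    ring
  have hbad : n / (4 * W) * (W * D) = n * D / 4 := by
    field_simp
  rw [hlhs, hbad, div_le_iff₀ (by positivity)]
  nlinarith

theorem stmt_17 (W k r n : ℕ) (hk : 3 ≤ k) (hkW : k ≤ W) (hr : 1 ≤ r)
    (hvdW : ∀ a d : ℕ, 0 < d → ∀ c : ℕ → Fin r,
      ∃ a' d' : ℕ, 0 < d' ∧ AP k a' d' ⊆ AP W a d ∧
        ∃ i : Fin r, ∀ x ∈ AP k a' d', c x = i)
    (hn : 2 * W ^ 2 ≤ n)
    (χ : ℕ → Fin (r + 1))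
    (hlast : (((Finset.Icc 1 n).filter (fun x => χ x = Fin.last r)).card : ℝ)
      ≤ (n : ℝ) / (4 * W)) :
    ((n : ℝ) ^ 2) / (2 * (W : ℝ) ^ 3) ≤
      ({P : Finset ℕ | (∃ a d : ℕ, 0 < d ∧ P = AP k a d) ∧ ↑P ⊆ Set.Icc 1 n ∧
        ∃ i : Fin (r + 1), i ≠ Fin.last r ∧ ∀ x ∈ P, χ x = i}.ncard : ℝ) := by
  set D := 3 * n / (4 * W)
  set L := (Icc 1 n).filter fun x => χ x = Fin.last r
  have hW : 3 ≤ W := hk.trans hkW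
  have hD : 4 * W * D ≤ 3 * n := by rw [mul_comm]; exact Nat.div_mul_le_self _ _
  have hD' : 3 * n < 4 * W * (D + 1) := Nat.lt_mul_div_succ _ (by omega)
  have hWD : (W - 1) * D ≤ n := by
    have := Nat.mul_le_mul_right D (Nat.sub_le W 1)
    nlinarith
  refine le_of_mul_le_mul_left ?_ (Nat.cast_pos.2 (Nat.choose_pos (by omega : 2 ≤ W)))
  calc (W.choose 2 : ℝ) * (n ^ 2 / (2 * W ^ 3))
      = W * (W - 1) / 2 * (n ^ 2 / (2 * W ^ 3)) := by rw [Nat.cast_choose_two]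
    _ ≤ D * n - ((W : ℝ) - 1) * (D * (D + 1) / 2) - n / (4 * W) * (W * D) :=
        quadratic_lower_bound (by exact_mod_cast hW) (by exact_mod_cast hn)
          (by exact_mod_cast hD) (by exact_mod_cast hD')
    _ ≤ D * n - ((W : ℝ) - 1) * (D * (D + 1) / 2) - #L * (W * D) := by gcongr
    _ ≤ #{p ∈ apsOfDiffLE n W D | Disjoint (AP W p.1 p.2) L} :=
        card_filter_disjoint_apsOfDiffLE_ge (by omega) hWD _
    _ ≤ W.choose 2 * ((monochromaticAPs k n r χ).ncard : ℝ) := by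
        exact_mod_cast card_filter_disjoint_apsOfDiffLE_le (by omega) hr hvdW χ
end

section
/- Let R ≥ k ≥ 3 and r ≥ 1 be such that every r-colouring of the edges of the complete graph K_R yields a monochromatic K_k. Then for every n ≥ R² and every (r+1)-colouring of the edges of K_n, either there are more than (1/(2·binom(R,k)))·binom(n,k) copies of K_k that are monochromatic in one of the first r colours, or more than (1/R²)·binom(n,2) edges receive colour r+1. -/
/-!
Average over the `R`-subsets `S` of the vertex set. If `S` spans no edge of the last colour, the
Ramsey property finds a monochromatic `K_k` inside `S`; otherwise `S` contains an edge of the last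
colour. A fixed `k`-set lies in `binom(n-k, R-k)` of the sets `S` and a fixed edge in
`binom(n-2, R-2)` of them. If at most `binom(n,2)/R²` edges have the last colour, then, since
`binom(n,2) binom(n-2,R-2) = binom(n,R) binom(R,2) < binom(n,R) R²/2`, fewer than half of the sets
`S` contain such an edge, so more than half of them contain a monochromatic `K_k` in one of the
first `r` colours; as `binom(n,k) binom(n-k,R-k) = binom(n,R) binom(R,k)`, this gives more than
`binom(n,k) / (2 binom(R,k))` such copies of `K_k`.
-/

open Finset

theorem card_le_card_mul_choose_of_forall_exists_subset {α β : Type*} [DecidableEq α]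
    {t : Finset α} {𝒜 : Finset (Finset α)} {ℬ : Finset β} {f : β → Finset α} {m s : ℕ}
    (h𝒜 : 𝒜 ⊆ t.powersetCard m) (hf : ∀ b ∈ ℬ, f b ⊆ t ∧ #(f b) = s) (hsm : s ≤ m)
    (hcover : ∀ A ∈ 𝒜, ∃ b ∈ ℬ, f b ⊆ A) :
    #𝒜 ≤ #ℬ * (#t - s).choose (m - s) := by
  rw [← mul_one #𝒜]
  refine card_mul_le_card_mul (fun A b => f b ⊆ A) (fun A hA => card_pos.2 ?_) fun b hb => ?_
  · obtain ⟨b, hb, hbA⟩ := hcover A hA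
    exact ⟨b, (mem_bipartiteAbove _).2 ⟨hb, hbA⟩⟩
  · obtain ⟨hbt, hbs⟩ := hf b hb
    calc #(𝒜.bipartiteBelow (fun A b => f b ⊆ A) b)
        ≤ #((t.powersetCard m).filter (f b ⊆ ·)) := card_le_card (filter_subset_filter _ h𝒜)
      _ = (#t - s).choose (m - s) := by
        rw [card_filter_powersetCard_subset _ _ _ hbt (hbs ▸ hsm), hbs]

section Colouring

variable {α κ : Type*}

-- Reducible, so that filtering by these predicates uses the decidability instances of their
-- unfolded forms, as they appear in the statement of the theorem.
abbrev IsMonochromatic (c : Sym2 α → κ) (A : Finset α) (i : κ) : Prop :=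
  ∀ x ∈ A, ∀ y ∈ A, x ≠ y → c s(x, y) = i

abbrev AvoidsColour (c : Sym2 α → κ) (S : Finset α) (i : κ) : Prop :=
  ∀ x ∈ S, ∀ y ∈ S, x ≠ y → c s(x, y) ≠ i

theorem exists_isMonochromatic_subset_of_card_eq {R k : ℕ}
    (hRam : ∀ c : Sym2 (Fin R) → κ, ∃ (i : κ) (A : Finset (Fin R)), #A = k ∧ IsMonochromatic c A i)
    (c : Sym2 α → κ) {S : Finset α} (hS : #S = R) :
    ∃ A ⊆ S, #A = k ∧ ∃ i, IsMonochromatic c A i := by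
  let e : S ≃ Fin R := Fintype.equivFinOfCardEq (by rw [Fintype.card_coe, hS])
  let f : Fin R ↪ α := ⟨fun j => e.symm j, Subtype.val_injective.comp e.symm.injective⟩
  obtain ⟨i, B, hB, hmono⟩ := hRam (c ∘ Sym2.map f)
  refine ⟨B.map f, fun x hx => ?_, by rw [card_map, hB], i, ?_⟩
  · obtain ⟨j, -, rfl⟩ := mem_map.1 hx
    exact (e.symm j).2
  · simp only [IsMonochromatic, mem_map, forall_exists_index, and_imp]
    rintro _ a ha rfl _ b hb rfl hab
    simpa using hmono a ha b hb (ne_of_apply_ne f hab)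

theorem exists_isMonochromatic_ne_last_subset {r R k : ℕ} (hr : 1 ≤ r)
    (hRam : ∀ c : Sym2 (Fin R) → Fin r, ∃ (i : Fin r) (A : Finset (Fin R)),
      #A = k ∧ IsMonochromatic c A i)
    (χ : Sym2 α → Fin (r + 1)) {S : Finset α} (hS : #S = R)
    (hS_avoid : AvoidsColour χ S (Fin.last r)) :
    ∃ A ⊆ S, #A = k ∧ ∃ i ≠ Fin.last r, IsMonochromatic χ A i := by
  -- Recolour the edges of the last colour (none of which lie in `S`) by an arbitrary colour.
  let c : Sym2 α → Fin r := fun e =>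
    if h : χ e = Fin.last r then ⟨0, hr⟩ else (χ e).castPred h
  obtain ⟨A, hAS, hA, i, hmono⟩ := exists_isMonochromatic_subset_of_card_eq hRam c hS
  refine ⟨A, hAS, hA, i.castSucc, (Fin.castSucc_lt_last i).ne, fun x hx y hy hxy => ?_⟩
  have hne := hS_avoid x (hAS hx) y (hAS hy) hxy
  rw [← hmono x hx y hy hxy]
  simp [c, hne]

variable [Fintype α] [DecidableEq α] [DecidableEq κ]

theorem card_avoidsColour_last_le {r R k : ℕ} (hr : 1 ≤ r) (hkR : k ≤ R)
    (hRam : ∀ c : Sym2 (Fin R) → Fin r, ∃ (i : Fin r) (A : Finset (Fin R)),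
      #A = k ∧ IsMonochromatic c A i)
    (χ : Sym2 α → Fin (r + 1)) :
    #{S ∈ univ.powersetCard R | AvoidsColour χ S (Fin.last r)} ≤
      #{A | #A = k ∧ ∃ i, i ≠ Fin.last r ∧ IsMonochromatic χ A i} *
        (Fintype.card α - k).choose (R - k) := by
  refine card_le_card_mul_choose_of_forall_exists_subset (f := id) (filter_subset _ _)
    (fun A hA => ⟨subset_univ A, (mem_filter.1 hA).2.1⟩) hkR fun S hS => ?_
  obtain ⟨hS, hS_avoid⟩ := mem_filter.1 hS
  obtain ⟨A, hAS, hA, hmono⟩ :=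
    exists_isMonochromatic_ne_last_subset hr hRam χ (mem_powersetCard.1 hS).2 hS_avoid
  exact ⟨A, mem_filter.2 ⟨mem_univ A, hA, hmono⟩, hAS⟩

theorem choose_card_le_card_avoidsColour_add (χ : Sym2 α → κ) (i : κ) {R : ℕ} (hR : 2 ≤ R) :
    (Fintype.card α).choose R ≤ #{S ∈ univ.powersetCard R | AvoidsColour χ S i} +
      #{e : Sym2 α | ¬ e.IsDiag ∧ χ e = i} * (Fintype.card α - 2).choose (R - 2) := by
  rw [← card_univ, ← card_powersetCard, ← card_filter_add_card_filter_not (AvoidsColour χ · i)]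
  refine Nat.add_le_add_left (card_le_card_mul_choose_of_forall_exists_subset
    (f := Sym2.toFinset) (filter_subset _ _)
    (fun e he => ⟨subset_univ _, Sym2.card_toFinset_of_not_isDiag e (mem_filter.1 he).2.1⟩) hR
    fun S hS => ?_) _
  obtain ⟨x, hx, y, hy, hxy, hχ⟩ : ∃ x ∈ S, ∃ y ∈ S, x ≠ y ∧ χ s(x, y) = i := by
    simpa [AvoidsColour] using (mem_filter.1 hS).2
  refine ⟨s(x, y), mem_filter.2 ⟨mem_univ _, by simpa using hxy, hχ⟩, fun v hv => ?_⟩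
  rcases Sym2.mem_iff.1 (Sym2.mem_toFinset.1 hv) with rfl | rfl <;> assumption

end Colouring

theorem two_mul_choose_two_lt_sq {R : ℕ} (hR : 0 < R) : 2 * R.choose 2 < R ^ 2 := by
  have h := Nat.mul_div_le (R * (R - 1)) 2
  have : R * (R - 1) < R ^ 2 := by
    rw [sq]
    exact Nat.mul_lt_mul_of_pos_left (by omega) hR
  rw [Nat.choose_two_right]
  omega

theorem two_mul_mul_choose_lt_choose {n R e : ℕ} (hR : 2 ≤ R) (hRn : R ≤ n)
    (he : e * R ^ 2 ≤ n.choose 2) :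
    2 * (e * (n - 2).choose (R - 2)) < n.choose R := by
  refine Nat.lt_of_mul_lt_mul_right (a := R ^ 2) ?_
  calc 2 * (e * (n - 2).choose (R - 2)) * R ^ 2
      = 2 * (e * R ^ 2) * (n - 2).choose (R - 2) := by ring
    _ ≤ 2 * n.choose 2 * (n - 2).choose (R - 2) := by gcongr
    _ = n.choose R * (2 * R.choose 2) := by rw [mul_assoc, ← Nat.choose_mul hR]; ring
    _ < n.choose R * R ^ 2 :=
      Nat.mul_lt_mul_of_pos_left (two_mul_choose_two_lt_sq (by omega)) (Nat.choose_pos hRn)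

theorem choose_lt_two_mul_choose_mul_of_le_mul_choose {n R k g m : ℕ} (hkR : k ≤ R)
    (hg : g ≤ m * (n - k).choose (R - k)) (hgR : n.choose R < 2 * g) :
    n.choose k < 2 * R.choose k * m := by
  refine Nat.lt_of_mul_lt_mul_right (a := (n - k).choose (R - k)) ?_
  calc n.choose k * (n - k).choose (R - k)
      = n.choose R * R.choose k := (Nat.choose_mul hkR).symm
    _ < 2 * g * R.choose k := Nat.mul_lt_mul_of_pos_right hgR (Nat.choose_pos hkR)
    _ ≤ 2 * (m * (n - k).choose (R - k)) * R.choose k := by gcongr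
    _ = 2 * R.choose k * m * (n - k).choose (R - k) := by ring

theorem stmt_18 (R k r : ℕ) (hk : 3 ≤ k) (hkR : k ≤ R) (hr : 1 ≤ r)
    (hRam : ∀ c : Sym2 (Fin R) → Fin r, ∃ (i : Fin r) (A : Finset (Fin R)),
      A.card = k ∧ ∀ x ∈ A, ∀ y ∈ A, x ≠ y → c s(x, y) = i)
    (n : ℕ) (hn : R ^ 2 ≤ n) (χ : Sym2 (Fin n) → Fin (r + 1)) :
    ((n.choose k : ℝ) / (2 * (R.choose k : ℝ)) <
      ({A : Finset (Fin n) | A.card = k ∧ ∃ i : Fin (r + 1), i ≠ Fin.last r ∧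
        ∀ x ∈ A, ∀ y ∈ A, x ≠ y → χ s(x, y) = i}.ncard : ℝ)) ∨
    ((n.choose 2 : ℝ) / (R : ℝ) ^ 2 <
      ({e : Sym2 (Fin n) | ¬ e.IsDiag ∧ χ e = Fin.last r}.ncard : ℝ)) := by
  have hR : 2 ≤ R := by omega
  have hRn : R ≤ n := (Nat.le_self_pow two_ne_zero R).trans hn
  have hR_sq : (0 : ℝ) < (R : ℝ) ^ 2 := by positivity
  have hRk : (0 : ℝ) < 2 * (R.choose k : ℝ) := by
    have := Nat.choose_pos hkR
    positivity
  rw [Set.ncard_eq_toFinset_card', Set.ncard_eq_toFinset_card', Set.toFinset_ofPred,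
    Set.toFinset_ofPred, or_iff_not_imp_right, not_lt, le_div_iff₀ hR_sq, div_lt_iff₀ hRk]
  intro hE
  have hgood := card_avoidsColour_last_le hr hkR hRam χ
  have hsplit := choose_card_le_card_avoidsColour_add χ (Fin.last r) hR
  simp only [Fintype.card_fin] at hgood hsplit
  have hbad := two_mul_mul_choose_lt_choose hR hRn (e := #{e | ¬ e.IsDiag ∧ χ e = Fin.last r})
    (by exact_mod_cast hE)
  rw [mul_comm]
  exact_mod_cast choose_lt_two_mul_choose_mul_of_le_mul_choose hkR hgood (by omega)
end

section
/- Let N ≥ 1, 0 < p < 1, r ≥ 1, s ≥ 1 and M ≥ 0 with r·s·M ≤ 2^{rs}·p·N. Then Σ over all r·s-tuples (S_{1,1},...,S_{r,s}) of subsets of a fixed N-element set with each |S_{i,σ}| ≤ M of p^{|∪_{i,σ} S_{i,σ}|} is at most (r·s·M + 1) · (e·N·2^{rs}·p/(r·s·M))^{r·s·M}. -/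
open Finset Nat

lemma aux_one_add_inv_pow (j : ℕ) (hj : 1 ≤ j) :
    (1 + 1/(j:ℝ))^j ≤ Real.exp 1 := by
  have hj0 : (0:ℝ) < j := by exact_mod_cast hj
  have h : (1:ℝ) + 1/j ≤ Real.exp (1/j) := by
    have := Real.add_one_le_exp (1/(j:ℝ)); linarith
  calc (1 + 1/(j:ℝ))^j ≤ (Real.exp (1/j))^j := by
        apply pow_le_pow_left₀ (by positivity) h
    _ = Real.exp 1 := by
        rw [← Real.exp_nat_mul]; congr 1; field_simp

lemma aux_choose_le (N m : ℕ) (hm : 1 ≤ m) :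
    (N.choose m : ℝ) ≤ (Real.exp 1 * N / m)^m := by
  have hm0 : (0:ℝ) < m := by exact_mod_cast hm
  have hfac : (0:ℝ) < (m ! : ℝ) := by exact_mod_cast Nat.factorial_pos m
  have h1 : (N.choose m : ℝ) ≤ (N:ℝ)^m / m ! := Nat.choose_le_pow_div m N
  have h2 : (m:ℝ)^m / m ! ≤ Real.exp m := Real.pow_div_factorial_le_exp (x := (m:ℝ)) (by positivity) m
  have h3 : (m:ℝ)^m ≤ Real.exp 1 ^ m * m ! := by
    rw [Real.exp_one_pow]
    calc (m:ℝ)^m = ((m:ℝ)^m / m !) * m ! := by field_simp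
      _ ≤ Real.exp m * m ! := by nlinarith
  refine h1.trans ?_
  rw [div_pow, mul_pow, div_le_div_iff₀ hfac (pow_pos hm0 m)]
  have hN : (0:ℝ) ≤ (N:ℝ)^m := by positivity
  nlinarith [mul_le_mul_of_nonneg_left h3 hN]

lemma aux_mono_step (A : ℝ) (j : ℕ) (hj : 1 ≤ j) (hA : (j:ℝ)+1 ≤ A) :
    (Real.exp 1 * A / j)^j ≤ (Real.exp 1 * A / (j+1 : ℕ))^(j+1) := by
  have hj0 : (0:ℝ) < j := by exact_mod_cast hj
  have hA0 : (0:ℝ) < A := by linarith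
  have he : (0:ℝ) < Real.exp 1 * A := by positivity
  have hpow : (0:ℝ) < ((j:ℝ)+1)^(j+1) := by positivity
  have h1 : ((j:ℝ)+1)^j = (j:ℝ)^j * (1 + 1/(j:ℝ))^j := by
    rw [← mul_pow]; congr 1; field_simp
  have h2 := aux_one_add_inv_pow j hj
  have key : ((j:ℝ)+1)^(j+1) ≤ Real.exp 1 * A * (j:ℝ)^j := by
    have : ((j:ℝ)+1)^(j+1) = ((j:ℝ)+1) * ((j:ℝ)^j * (1 + 1/(j:ℝ))^j) := by
      rw [← h1, pow_succ]; ring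
    rw [this]
    have hjp : (0:ℝ) ≤ (j:ℝ)^j := by positivity
    have hee : (0:ℝ) < Real.exp 1 := Real.exp_pos 1
    nlinarith [pow_pos hj0 j, mul_le_mul_of_nonneg_left h2 (mul_pos (by linarith : (0:ℝ) < (j:ℝ)+1) (pow_pos hj0 j)).le]
  push_cast
  rw [div_pow, div_pow, div_le_div_iff₀ (pow_pos hj0 j) hpow]
  calc (Real.exp 1 * A)^j * ((j:ℝ)+1)^(j+1)
      ≤ (Real.exp 1 * A)^j * (Real.exp 1 * A * (j:ℝ)^j) := by
        apply mul_le_mul_of_nonneg_left key (by positivity)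
    _ = (Real.exp 1 * A)^(j+1) * (j:ℝ)^j := by ring

lemma aux_mono (A : ℝ) (m k : ℕ) (hm : 1 ≤ m) (hmk : m ≤ k) (hA : (k:ℝ) ≤ A) :
    (Real.exp 1 * A / m)^m ≤ (Real.exp 1 * A / k)^k := by
  induction k, hmk using Nat.le_induction with
  | base => exact le_refl _
  | succ n hn ih =>
    have hn1 : 1 ≤ n := le_trans hm hn
    have hA' : (n:ℝ) ≤ A := by push_cast at hA ⊢; linarith
    have h1 : ((n:ℝ)+1) ≤ A := by push_cast at hA; linarith
    exact (ih hA').trans (aux_mono_step A n hn1 h1)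
open Finset in
theorem stmt_19 (N r s M : ℕ) (hN : 1 ≤ N) (hr : 1 ≤ r) (hs : 1 ≤ s)
    (p : ℝ) (hp0 : 0 < p) (hp1 : p < 1)
    (hM : (r * s * M : ℝ) ≤ 2 ^ (r * s) * p * N) :
    ∑ S ∈ (univ : Finset (Fin r × Fin s → Finset (Fin N))).filter
        (fun S => ∀ q, (S q).card ≤ M),
      p ^ (univ.biUnion S).card ≤
    ((r * s * M : ℝ) + 1) *
      (Real.exp 1 * N * 2 ^ (r * s) * p / (r * s * M)) ^ (r * s * M) := by
  classical
  set K := r * s * M with hK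
  set F := (univ : Finset (Fin r × Fin s → Finset (Fin N))).filter
      (fun S => ∀ q, (S q).card ≤ M) with hF
  set A : ℝ := (N : ℝ) * 2 ^ (r * s) * p with hA
  have hA0 : 0 < A := by positivity
  have hKA : (K : ℝ) ≤ A := by
    rw [hA, hK]; push_cast; nlinarith [hM]
  set B : ℝ := Real.exp 1 * N * 2 ^ (r * s) * p / (r * s * M) with hB
  have hBform : B = Real.exp 1 * A / K := by
    rw [hB, hA, hK]; push_cast; ring
  -- every S in F has union of card ≤ K
  have hmap : ∀ S ∈ F, (univ.biUnion S).card ∈ range (K + 1) := by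
    intro S hS
    rw [hF, mem_filter] at hS
    rw [mem_range, Nat.lt_succ_iff, hK]
    calc (univ.biUnion S).card ≤ ∑ q : Fin r × Fin s, (S q).card :=
          card_biUnion_le
      _ ≤ ∑ _q : Fin r × Fin s, M := sum_le_sum fun q _ => hS.2 q
      _ = r * s * M := by simp [mul_assoc]
  -- fiberwise decomposition
  have hfib : ∑ S ∈ F, p ^ (univ.biUnion S).card
      = ∑ m ∈ range (K + 1), ∑ S ∈ F.filter (fun S => (univ.biUnion S).card = m),
          p ^ (univ.biUnion S).card :=
    (sum_fiberwise_of_maps_to hmap _).symm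
  rw [hfib]
  -- per-fiber bound
  have hfiber : ∀ m ∈ range (K + 1),
      ∑ S ∈ F.filter (fun S => (univ.biUnion S).card = m),
        p ^ (univ.biUnion S).card ≤ B ^ K := by
    intro m hm
    rw [mem_range, Nat.lt_succ_iff] at hm
    have hcard : (F.filter (fun S => (univ.biUnion S).card = m)).card
        ≤ N.choose m * (2 ^ m) ^ (r * s) := by
      have hsub : F.filter (fun S => (univ.biUnion S).card = m) ⊆
          (powersetCard m (univ : Finset (Fin N))).biUnion
            (fun T => Fintype.piFinset fun _ : Fin r × Fin s => T.powerset) := by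
        intro S hS
        rw [mem_filter] at hS
        apply mem_biUnion.2
        refine ⟨univ.biUnion S, ?_, ?_⟩
        · rw [mem_powersetCard]; exact ⟨subset_univ _, hS.2⟩
        · rw [Fintype.mem_piFinset]
          intro q
          rw [mem_powerset]
          exact subset_biUnion_of_mem S (mem_univ q)
      calc (F.filter (fun S => (univ.biUnion S).card = m)).card
          ≤ ((powersetCard m (univ : Finset (Fin N))).biUnion
              (fun T => Fintype.piFinset fun _ : Fin r × Fin s => T.powerset)).card :=
            card_le_card hsub
        _ ≤ ∑ T ∈ powersetCard m (univ : Finset (Fin N)),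
              (Fintype.piFinset fun _ : Fin r × Fin s => T.powerset).card :=
            card_biUnion_le
        _ = ∑ T ∈ powersetCard m (univ : Finset (Fin N)), (2 ^ m) ^ (r * s) := by
            apply sum_congr rfl
            intro T hT
            rw [mem_powersetCard] at hT
            rw [Fintype.card_piFinset]
            simp [card_powerset, hT.2, mul_assoc]
        _ = N.choose m * (2 ^ m) ^ (r * s) := by
            simp [Finset.sum_const, Finset.card_powersetCard, Finset.card_univ, smul_eq_mul]
    -- sum over fiber = card * p^m
    have hsum : ∑ S ∈ F.filter (fun S => (univ.biUnion S).card = m),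
        p ^ (univ.biUnion S).card
        = ((F.filter (fun S => (univ.biUnion S).card = m)).card : ℝ) * p ^ m := by
      calc ∑ S ∈ F.filter (fun S => (univ.biUnion S).card = m), p ^ (univ.biUnion S).card
          = ∑ S ∈ F.filter (fun S => (univ.biUnion S).card = m), p ^ m :=
            sum_congr rfl fun S hS => by rw [(mem_filter.1 hS).2]
        _ = _ := by rw [sum_const, nsmul_eq_mul]
    rw [hsum]
    -- bound card * p^m ≤ choose * (2^(rs))^m * p^m ≤ B^K
    have hterm : ((F.filter (fun S => (univ.biUnion S).card = m)).card : ℝ) * p ^ m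
        ≤ (N.choose m : ℝ) * (2 ^ (r * s) : ℝ) ^ m * p ^ m := by
      apply mul_le_mul_of_nonneg_right _ (by positivity)
      have : ((2:ℝ) ^ (r*s)) ^ m = ((2 ^ m : ℕ) : ℝ) ^ (r * s) := by
        push_cast; rw [← pow_mul, ← pow_mul, mul_comm]
      rw [this]
      exact_mod_cast hcard
    refine hterm.trans ?_
    rcases Nat.eq_zero_or_pos m with hm0 | hm1
    · subst hm0
      simp only [pow_zero, Nat.choose_zero_right, Nat.cast_one, mul_one, one_mul]
      rcases Nat.eq_zero_or_pos K with hK0 | hK1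
      · rw [hK0]; simp
      · have hB1 : (1:ℝ) ≤ B := by
          rw [hBform]
          have hK0' : (0:ℝ) < K := by exact_mod_cast hK1
          rw [le_div_iff₀ hK0']
          have he1 : (1:ℝ) ≤ Real.exp 1 := Real.one_le_exp (by norm_num)
          nlinarith
        exact one_le_pow₀ hB1
    · have hK1 : 1 ≤ K := le_trans hm1 hm
      have h1 : (N.choose m : ℝ) ≤ (Real.exp 1 * N / m) ^ m := aux_choose_le N m hm1
      have h2 : (N.choose m : ℝ) * (2 ^ (r * s) : ℝ) ^ m * p ^ m
          ≤ (Real.exp 1 * A / m) ^ m := by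
        have : (Real.exp 1 * A / m) ^ m
            = (Real.exp 1 * N / m) ^ m * ((2 ^ (r * s) : ℝ) ^ m * p ^ m) := by
          rw [← mul_pow, ← mul_pow, hA]; congr 1; field_simp
        rw [this, ← mul_assoc]
        exact mul_le_mul_of_nonneg_right (mul_le_mul_of_nonneg_right h1 (by positivity)) (by positivity)
      refine h2.trans ?_
      rw [hBform]
      exact aux_mono A m K hm1 hm hKA
  calc ∑ m ∈ range (K + 1), ∑ S ∈ F.filter (fun S => (univ.biUnion S).card = m),
        p ^ (univ.biUnion S).card
      ≤ ∑ _m ∈ range (K + 1), B ^ K := sum_le_sum hfiber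
    _ = ((K : ℝ) + 1) * B ^ K := by
        rw [sum_const, card_range, nsmul_eq_mul]; push_cast; ring
    _ = ((r * s * M : ℝ) + 1) * B ^ K := by rw [hK]; push_cast; ring
end
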